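/- arXiv:2505.16548 — 2 statements merged into one kernel-verified Lean document; each statement's English description precedes it below -/
import Mathlib

section
/- Let Q be an M×M substochastic matrix and R an M×K matrix with [Q R] row-stochastic, and suppose there exist τ ≥ 0 and ε > 0 such that every row of Q^τ R has L1-norm at least ε. Then the affine map F(P) = QP + R on M×K real matrices satisfies ‖F^(τ+1)(P) − F^(τ+1)(P')‖_∞ ≤ (1 − ε)‖P − P'‖_∞ for all M×K matrices P, P', where ‖·‖_∞ denotes the induced ∞-norm (maximum row L1-norm). -/
/-!
The difference of two iterates is `Q ^ (τ + 1) * (P - P')`, so it suffices that every row of the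
nonnegative matrix `Q ^ (τ + 1)` has sum at most `1 - ε`. Since `[Q R]` is row-stochastic, passing
from `Q ^ τ` to `Q ^ (τ + 1)` loses exactly the row mass of `Q ^ τ * R`, which is at least `ε`,
while the row sums of `Q ^ τ` are at most `1`.
-/

open Finset Matrix

namespace Matrix

variable {l m n : Type*} [Fintype m]

lemma sum_mul_apply [Fintype n] {α : Type*} [NonUnitalNonAssocSemiring α] (A : Matrix l m α)
    (B : Matrix m n α) (i : l) : ∑ k, (A * B) i k = ∑ j, A i j * ∑ k, B j k := by
  simp only [mul_apply, mul_sum]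
  exact sum_comm

lemma sum_abs_mul_apply_le_mul_iSup [Fintype n] {A : Matrix l m ℝ} {i : l}
    (hA : ∀ j, 0 ≤ A i j) (D : Matrix m n ℝ) :
    ∑ k, |(A * D) i k| ≤ (∑ j, A i j) * ⨆ j, ∑ k, |D j k| := by
  have hD : ∀ j, ∑ k, |D j k| ≤ ⨆ j, ∑ k, |D j k| :=
    le_ciSup (Set.finite_range _).bddAbove
  calc ∑ k, |(A * D) i k| ≤ ∑ k, ∑ j, A i j * |D j k| := by
        gcongr with k
        refine (abs_sum_le_sum_abs _ _).trans_eq (sum_congr rfl fun j _ => ?_)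
        rw [abs_mul, abs_of_nonneg (hA j)]
    _ = ∑ j, A i j * ∑ k, |D j k| := by simp only [mul_sum]; exact sum_comm
    _ ≤ ∑ j, A i j * ⨆ j, ∑ k, |D j k| := by gcongr with j; exacts [hA j, hD j]
    _ = (∑ j, A i j) * ⨆ j, ∑ k, |D j k| := (sum_mul ..).symm

variable [DecidableEq m]

lemma iterate_mul_add_sub_iterate {α : Type*} [Ring α] (Q : Matrix m m α) (R P P' : Matrix m n α)
    (t : ℕ) : (fun X => Q * X + R)^[t] P - (fun X => Q * X + R)^[t] P' = Q ^ t * (P - P') := by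
  induction t with
  | zero => simp
  | succ t ih =>
    rw [Function.iterate_succ_apply', Function.iterate_succ_apply', add_sub_add_right_eq_sub,
      ← Matrix.mul_sub, ih, ← Matrix.mul_assoc, pow_succ']

lemma sum_pow_apply_le_one {Q : Matrix m m ℝ} (hQ : ∀ i j, 0 ≤ Q i j)
    (hQ1 : ∀ i, ∑ j, Q i j ≤ 1) (t : ℕ) (i : m) : ∑ j, (Q ^ t) i j ≤ 1 := by
  induction t generalizing i with
  | zero => simp [one_apply]
  | succ t ih =>
    calc ∑ j, (Q ^ (t + 1)) i j = ∑ j, Q i j * ∑ k, (Q ^ t) j k := by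
          rw [pow_succ', sum_mul_apply]
      _ ≤ ∑ j, Q i j * 1 := by gcongr with j; exacts [hQ i j, ih j]
      _ ≤ 1 := by simpa using hQ1 i

variable [Fintype n]

lemma sum_pow_succ_apply {Q : Matrix m m ℝ} {R : Matrix m n ℝ}
    (hrow : ∀ i, ∑ j, Q i j + ∑ k, R i k = 1) (t : ℕ) (i : m) :
    ∑ j, (Q ^ (t + 1)) i j = ∑ j, (Q ^ t) i j - ∑ k, (Q ^ t * R) i k := by
  have hQ : ∀ j, ∑ k, Q j k = 1 - ∑ k, R j k := fun j => eq_sub_of_add_eq (hrow j)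
  simp only [pow_succ, sum_mul_apply, hQ, mul_sub, mul_one, sum_sub_distrib]

lemma sum_pow_succ_apply_le_one_sub {Q : Matrix m m ℝ} {R : Matrix m n ℝ}
    (hQ : ∀ i j, 0 ≤ Q i j) (hR : ∀ i k, 0 ≤ R i k) (hrow : ∀ i, ∑ j, Q i j + ∑ k, R i k = 1)
    {t : ℕ} {ε : ℝ} (ht : ∀ i, ε ≤ ∑ k, |(Q ^ t * R) i k|) (i : m) :
    ∑ j, (Q ^ (t + 1)) i j ≤ 1 - ε := by
  have hQ1 : ∀ i, ∑ j, Q i j ≤ 1 := fun i =>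
    (le_add_of_nonneg_right (sum_nonneg fun k _ => hR i k)).trans_eq (hrow i)
  have hleak : ∑ k, |(Q ^ t * R) i k| = ∑ k, (Q ^ t * R) i k :=
    sum_congr rfl fun k _ => abs_of_nonneg <|
      sum_nonneg fun j _ => mul_nonneg (pow_apply_nonneg hQ t i j) (hR j k)
  rw [sum_pow_succ_apply hrow]
  linarith [sum_pow_apply_le_one hQ hQ1 t i, ht i]

end Matrix

theorem stmt1_general (M K : ℕ) (Q : Matrix (Fin M) (Fin M) ℝ) (R : Matrix (Fin M) (Fin K) ℝ)
    (hQ0 : ∀ i j, 0 ≤ Q i j) (hR0 : ∀ i k, 0 ≤ R i k)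
    (hrow : ∀ i, (∑ j, Q i j) + (∑ k, R i k) = 1)
    (τ : ℕ) (ε : ℝ)
    (hτ : ∀ i, ε ≤ ∑ k, |(Q ^ τ * R) i k|)
    (P P' : Matrix (Fin M) (Fin K) ℝ) :
    ∀ i, ∑ k, |((fun X => Q * X + R)^[τ + 1] P - (fun X => Q * X + R)^[τ + 1] P') i k|
      ≤ (1 - ε) * ⨆ i', ∑ k, |(P - P') i' k| := by
  intro i
  rw [iterate_mul_add_sub_iterate]
  calc _ ≤ (∑ j, (Q ^ (τ + 1)) i j) * ⨆ i', ∑ k, |(P - P') i' k| :=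
        sum_abs_mul_apply_le_mul_iSup (pow_apply_nonneg hQ0 _ i) _
    _ ≤ (1 - ε) * ⨆ i', ∑ k, |(P - P') i' k| :=
        mul_le_mul_of_nonneg_right (sum_pow_succ_apply_le_one_sub hQ0 hR0 hrow hτ i)
          (Real.iSup_nonneg fun _ => sum_nonneg fun _ _ => abs_nonneg _)

theorem stmt1 (M K : ℕ) (Q : Matrix (Fin M) (Fin M) ℝ) (R : Matrix (Fin M) (Fin K) ℝ)
    (hQ0 : ∀ i j, 0 ≤ Q i j) (hR0 : ∀ i k, 0 ≤ R i k)
    (hrow : ∀ i, (∑ j, Q i j) + (∑ k, R i k) = 1)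
    (τ : ℕ) (ε : ℝ) (hε : 0 < ε)
    (hτ : ∀ i, ε ≤ ∑ k, |(Q ^ τ * R) i k|)
    (P P' : Matrix (Fin M) (Fin K) ℝ) :
    ∀ i, ∑ k, |((fun X => Q * X + R)^[τ + 1] P - (fun X => Q * X + R)^[τ + 1] P') i k|
      ≤ (1 - ε) * ⨆ i', ∑ k, |(P - P') i' k| :=
  stmt1_general M K Q R hQ0 hR0 hrow τ ε hτ P P'
end

section
/- Tabular TC iteration equals fixed-point iteration on the empirical chain: with tabular parameters Θ ∈ R^{M×K} (rows are probability vectors with positive entries) and empirical transition matrices Q̂, R̂ derived from a dataset of trajectories, any minimizer over row-stochastic Θ of the total TC loss Σ_{(s,y)∈B} H[δ_y ‖ θ_s] + Σ_{(s,s')∈A} H[θ^{(i)}_{s'} ‖ θ_s] satisfies Θ = Q̂ Θ^{(i)} + R̂, whenever every transient state appears in the data and Q̂ Θ^{(i)} + R̂ has strictly positive entries. -/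
/-!
Grouping the loss by source state, the terms with source `m` add up to `c m · H[T_m ‖ θ_m]`,
where `T = Q̂ Θ⁽ⁱ⁾ + R̂`: cross-entropy is linear in its target, and `c m · T_m` is exactly the
sum of the targets `Θ⁽ⁱ⁾_{m'}` and `δ_y` of the transitions out of `m`. The rows of `T` are
probability vectors, so `Θ = T` is admissible, and by Gibbs' inequality it is the unique
minimiser of each row's cross-entropy.
-/

open Finset

/-- Cross-entropy of `q` relative to target `p`. -/
noncomputable def crossEnt {K : ℕ} (p q : Fin K → ℝ) : ℝ := -∑ k, p k * Real.log (q k)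

theorem Multiset.sum_map_eq_sum_count_nsmul {α β : Type*} [Fintype α] [DecidableEq α]
    [AddCommMonoid β] (s : Multiset α) (f : α → β) :
    (s.map f).sum = ∑ a, s.count a • f a := by
  rw [Finset.sum_multiset_map_count]
  exact Finset.sum_subset (subset_univ _) fun a _ ha => by
    rw [Multiset.count_eq_zero.mpr (by simpa using ha), zero_nsmul]

theorem Multiset.count_map_fst {α β : Type*} [DecidableEq α] [DecidableEq β] [Fintype β]
    (s : Multiset (α × β)) (a : α) :
    (s.map Prod.fst).count a = ∑ b, s.count (a, b) := by
  induction s using Multiset.induction with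
  | empty => simp
  | cons x s ih =>
    simp [Multiset.count_cons, ih, Finset.sum_add_distrib, Prod.ext_iff, ite_and]

theorem mul_log_sub_mul_log_le {p q : ℝ} (hp : 0 < p) (hq : 0 < q) :
    p * Real.log q - p * Real.log p ≤ q - p := by
  have h := Real.log_le_sub_one_of_pos (div_pos hq hp)
  rw [Real.log_div hq.ne' hp.ne'] at h
  have := mul_le_mul_of_nonneg_left h hp.le
  rw [mul_sub, mul_sub, mul_div_cancel₀ _ hp.ne'] at this
  linarith

theorem mul_log_sub_mul_log_lt {p q : ℝ} (hp : 0 < p) (hq : 0 < q) (hne : q ≠ p) :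
    p * Real.log q - p * Real.log p < q - p := by
  have h := Real.log_lt_sub_one_of_pos (div_pos hq hp) (by rwa [ne_eq, div_eq_one_iff_eq hp.ne'])
  rw [Real.log_div hq.ne' hp.ne'] at h
  have := mul_lt_mul_of_pos_left h hp
  rw [mul_sub, mul_sub, mul_div_cancel₀ _ hp.ne'] at this
  linarith

theorem crossEnt_self_le_crossEnt {K : ℕ} {p q : Fin K → ℝ} (hp : ∀ k, 0 < p k)
    (hq : ∀ k, 0 < q k) (hsum : ∑ k, q k ≤ ∑ k, p k) :
    crossEnt p p ≤ crossEnt p q := by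
  have := Finset.sum_le_sum fun k (_ : k ∈ univ) => mul_log_sub_mul_log_le (hp k) (hq k)
  rw [Finset.sum_sub_distrib, Finset.sum_sub_distrib] at this
  simp only [crossEnt]
  linarith

theorem crossEnt_self_lt_crossEnt {K : ℕ} {p q : Fin K → ℝ} (hp : ∀ k, 0 < p k)
    (hq : ∀ k, 0 < q k) (hsum : ∑ k, q k ≤ ∑ k, p k) (hne : q ≠ p) :
    crossEnt p p < crossEnt p q := by
  obtain ⟨k₀, hk₀⟩ := Function.ne_iff.mp hne
  have := Finset.sum_lt_sum (fun k (_ : k ∈ univ) => mul_log_sub_mul_log_le (hp k) (hq k))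
    ⟨k₀, mem_univ _, mul_log_sub_mul_log_lt (hp k₀) (hq k₀) hk₀⟩
  rw [Finset.sum_sub_distrib, Finset.sum_sub_distrib] at this
  simp only [crossEnt]
  linarith

theorem crossEnt_const_mul_left {K : ℕ} (a : ℝ) (p q : Fin K → ℝ) :
    crossEnt (fun k => a * p k) q = a * crossEnt p q := by
  simp only [crossEnt, mul_assoc, ← Finset.mul_sum, mul_neg]

theorem crossEnt_indicator_left {K : ℕ} (y : Fin K) (q : Fin K → ℝ) :
    crossEnt (fun k => if k = y then (1 : ℝ) else 0) q = -Real.log (q y) := by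
  simp [crossEnt]

theorem eq_of_sum_mul_crossEnt_le {ι : Type*} [Fintype ι] {K : ℕ} {w : ι → ℝ}
    {P Θ : ι → Fin K → ℝ} (hw : ∀ i, 0 < w i) (hP : ∀ i k, 0 < P i k) (hΘ : ∀ i k, 0 < Θ i k)
    (hsum : ∀ i, ∑ k, Θ i k ≤ ∑ k, P i k)
    (hle : ∑ i, w i * crossEnt (P i) (Θ i) ≤ ∑ i, w i * crossEnt (P i) (P i)) :
    Θ = P := by
  by_contra hne
  obtain ⟨i₀, hi₀⟩ := Function.ne_iff.mp hne
  have := Finset.sum_lt_sum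
    (fun i (_ : i ∈ univ) => mul_le_mul_of_nonneg_left
      (crossEnt_self_le_crossEnt (hP i) (hΘ i) (hsum i)) (hw i).le)
    ⟨i₀, mem_univ _, mul_lt_mul_of_pos_left
      (crossEnt_self_lt_crossEnt (hP i₀) (hΘ i₀) (hsum i₀) hi₀) (hw i₀)⟩
  linarith

section TemporalConsistency

variable {M K : ℕ} (A : Multiset (Fin M × Fin M)) (B : Multiset (Fin M × Fin K))
  (Θi : Matrix (Fin M) (Fin K) ℝ)

noncomputable def tcLoss (Θ : Matrix (Fin M) (Fin K) ℝ) : ℝ :=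
  (B.map fun sy => crossEnt (fun k => if k = sy.2 then (1:ℝ) else 0) (Θ sy.1)).sum
    + (A.map fun ss => crossEnt (Θi ss.2) (Θ ss.1)).sum

/-- The TC targets of the transitions out of `m`, summed: a transition to `m'` contributes
`Θi m'`, a transition to label `y` the indicator of `y`. -/
noncomputable def targetMass (m : Fin M) (k : Fin K) : ℝ :=
  ∑ m', (A.count (m, m') : ℝ) * Θi m' k + B.count (m, k)

theorem tcLoss_eq_sum_crossEnt_targetMass (Θ : Matrix (Fin M) (Fin K) ℝ) :
    tcLoss A B Θi Θ = ∑ m, crossEnt (targetMass A B Θi m) (Θ m) := by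
  simp only [tcLoss, crossEnt_indicator_left]
  rw [Multiset.sum_map_eq_sum_count_nsmul B, Multiset.sum_map_eq_sum_count_nsmul A,
    Fintype.sum_prod_type, Fintype.sum_prod_type, ← sum_add_distrib]
  refine sum_congr rfl fun m _ => ?_
  simp only [nsmul_eq_mul, targetMass, crossEnt, add_mul,
    sum_add_distrib, sum_mul, mul_sum, neg_add, mul_neg, sum_neg_distrib, mul_assoc]
  rw [sum_comm, add_comm]

theorem sum_targetMass (hΘi : ∀ m, ∑ k, Θi m k = 1) (m : Fin M) :
    ∑ k, targetMass A B Θi m k = (A.map Prod.fst).count m + (B.map Prod.fst).count m := by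
  simp only [targetMass, sum_add_distrib, Multiset.count_map_fst, Nat.cast_sum]
  rw [sum_comm]
  simp only [← mul_sum, hΘi, mul_one]

theorem targetMass_eq_mul {c : Fin M → ℕ} (hc : ∀ m, (c m : ℝ) ≠ 0)
    {Qhat : Matrix (Fin M) (Fin M) ℝ} (hQhat : ∀ m m', Qhat m m' = (A.count (m, m') : ℝ) / c m)
    {Rhat : Matrix (Fin M) (Fin K) ℝ} (hRhat : ∀ m k, Rhat m k = (B.count (m, k) : ℝ) / c m)
    (m : Fin M) :
    targetMass A B Θi m = fun k => c m * (Qhat * Θi + Rhat) m k := by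
  ext k
  simp only [targetMass, Matrix.add_apply, Matrix.mul_apply, hQhat, hRhat, div_mul_eq_mul_div,
    ← sum_div, ← add_div]
  rw [mul_div_cancel₀ _ (hc m)]

end TemporalConsistency

theorem stmt12 (M K : ℕ)
    (A : Multiset (Fin M × Fin M)) (B : Multiset (Fin M × Fin K))
    (Θi Θ0 : Matrix (Fin M) (Fin K) ℝ)
    (hΘi : ∀ m, (∀ k, 0 ≤ Θi m k) ∧ ∑ k, Θi m k = 1)
    (c : Fin M → ℕ)
    (hc : ∀ m, c m = (A.map Prod.fst).count m + (B.map Prod.fst).count m)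
    (hcpos : ∀ m, 0 < c m)
    (Qhat : Matrix (Fin M) (Fin M) ℝ)
    (hQhat : ∀ m m', Qhat m m' = (A.count (m, m') : ℝ) / (c m : ℝ))
    (Rhat : Matrix (Fin M) (Fin K) ℝ)
    (hRhat : ∀ m k, Rhat m k = (B.count (m, k) : ℝ) / (c m : ℝ))
    (hpos : ∀ m k, 0 < (Qhat * Θi + Rhat) m k)
    (hΘ0 : ∀ m, (∀ k, 0 < Θ0 m k) ∧ ∑ k, Θ0 m k = 1)
    (hmin : ∀ Θ : Matrix (Fin M) (Fin K) ℝ,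
      (∀ m, (∀ k, 0 < Θ m k) ∧ ∑ k, Θ m k = 1) →
      ((B.map fun sy => crossEnt (fun k => if k = sy.2 then (1:ℝ) else 0) (Θ0 sy.1)).sum
          + (A.map fun ss => crossEnt (Θi ss.2) (Θ0 ss.1)).sum)
        ≤ ((B.map fun sy => crossEnt (fun k => if k = sy.2 then (1:ℝ) else 0) (Θ sy.1)).sum
          + (A.map fun ss => crossEnt (Θi ss.2) (Θ ss.1)).sum)) :
    Θ0 = Qhat * Θi + Rhat := by
  set T := Qhat * Θi + Rhat
  have hcpos' : ∀ m, (0 : ℝ) < c m := fun m => Nat.cast_pos.mpr (hcpos m)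
  have hmass : ∀ m, targetMass A B Θi m = fun k => c m * T m k :=
    targetMass_eq_mul A B Θi (fun m => (hcpos' m).ne') hQhat hRhat
  have hTsum : ∀ m, ∑ k, T m k = 1 := fun m => by
    have h := sum_targetMass A B Θi (fun m => (hΘi m).2) m
    simp only [hmass, ← mul_sum, ← Nat.cast_add, ← hc] at h
    exact (mul_eq_left₀ (hcpos' m).ne').mp h
  have hloss : ∀ Θ, tcLoss A B Θi Θ = ∑ m, c m * crossEnt (T m) (Θ m) := fun Θ => by
    simp only [tcLoss_eq_sum_crossEnt_targetMass, hmass, crossEnt_const_mul_left]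
  have hle := hmin T fun m => ⟨hpos m, hTsum m⟩
  rw [← tcLoss, ← tcLoss, hloss, hloss] at hle
  exact eq_of_sum_mul_crossEnt_le hcpos' hpos (fun m => (hΘ0 m).1)
    (fun m => by rw [hTsum, (hΘ0 m).2]) hle
end
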